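/- arXiv:1003.5960 — 2 statements merged into one kernel-verified Lean document; each statement's English description precedes it below -/
import Mathlib

section
/- If z and w are nonzero complex numbers whose arguments both lie in the open interval (0, 2π/(k+1)), and e^{iα} z = e^{iβ} w where α and β are real numbers with (k+1)α ≡ (k+1)β (mod 2π), then α ≡ β (mod 2π) and z = w. -/
open Real

/-!
Writing `z = r e^{iφ}`, `w = s e^{iψ}`, the rotation identity gives `r = s` and
`α + φ ≡ β + ψ (mod 2π)`, hence mod `p = 2π/(k+1)`, while `α ≡ β (mod p)` by the second
hypothesis. So `φ ≡ ψ (mod p)`, and the sector `0 < arg < p` is a fundamental domain for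
rotation by `p`, forcing `φ = ψ`.
-/

theorem AddCommGroup.ModEq.eq_of_mem_Ico {α : Type*} [AddCommGroup α] [LinearOrder α]
    [IsOrderedAddMonoid α] [Archimedean α] {p a b c : α} (hp : 0 < p) (h : a ≡ b [PMOD p])
    (ha : a ∈ Set.Ico c (c + p)) (hb : b ∈ Set.Ico c (c + p)) : a = b := by
  rw [← (toIcoMod_eq_self hp).2 ha, ← (toIcoMod_eq_self hp).2 hb]
  exact h.toIcoMod_eq_toIcoMod hp

namespace Complex

theorem exp_mul_I_eq_exp_mul_I_iff {a b : ℝ} :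
    exp (a * I) = exp (b * I) ↔ a ≡ b [PMOD (2 * π)] := by
  rw [← Circle.coe_exp, ← Circle.coe_exp, Circle.coe_inj, Circle.exp_inj]

theorem exp_mul_I_mul_polar (α r φ : ℝ) :
    exp (α * I) * (r * exp (φ * I)) = r * exp (↑(α + φ) * I) := by
  rw [ofReal_add, add_mul, exp_add]
  ring

theorem polar_eq_polar_iff {r s φ ψ : ℝ} (hr : 0 < r) (hs : 0 ≤ s) :
    (r : ℂ) * exp (φ * I) = s * exp (ψ * I) ↔ r = s ∧ φ ≡ ψ [PMOD (2 * π)] := by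
  constructor
  · intro h
    have hrs : r = s := by
      simpa [norm_exp_ofReal_mul_I, abs_of_pos hr, abs_of_nonneg hs] using congrArg norm h
    subst hrs
    exact ⟨rfl, exp_mul_I_eq_exp_mul_I_iff.1 (mul_left_cancel₀ (by exact_mod_cast hr.ne') h)⟩
  · rintro ⟨rfl, h⟩
    rw [exp_mul_I_eq_exp_mul_I_iff.2 h]

end Complex

/-- if `z, w` are nonzero complex numbers whose arguments lie in
`(0, 2π/(k+1))`, `e^{iα} z = e^{iβ} w`, and `(k+1)α ≡ (k+1)β (mod 2π)`, then
`α ≡ β (mod 2π)` and `z = w`. -/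
theorem sector_rotation_injective (k : ℕ) (z w : ℂ) (α β : ℝ)
    (hz : ∃ r φ : ℝ, 0 < r ∧ 0 < φ ∧ φ < 2 * π / (k + 1) ∧
      z = r * Complex.exp (φ * Complex.I))
    (hw : ∃ r φ : ℝ, 0 < r ∧ 0 < φ ∧ φ < 2 * π / (k + 1) ∧
      w = r * Complex.exp (φ * Complex.I))
    (heq : Complex.exp (α * Complex.I) * z = Complex.exp (β * Complex.I) * w)
    (hmod : Complex.exp (((k + 1 : ℝ) * α) * Complex.I)
          = Complex.exp (((k + 1 : ℝ) * β) * Complex.I)) :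
    Complex.exp (α * Complex.I) = Complex.exp (β * Complex.I) ∧ z = w := by
  obtain ⟨r, φ, hr, hφ0, hφ1, rfl⟩ := hz
  obtain ⟨s, ψ, hs, hψ0, hψ1, rfl⟩ := hw
  rw [Complex.exp_mul_I_mul_polar, Complex.exp_mul_I_mul_polar,
    Complex.polar_eq_polar_iff hr hs.le] at heq
  obtain ⟨rfl, hsum⟩ := heq
  set p := 2 * π / (k + 1)
  have hk : (k + 1 : ℝ) ≠ 0 := by positivity
  have hαβ : α ≡ β [PMOD p] :=
    (AddCommGroup.mul_modEq_mul_left hk).1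
      (Complex.exp_mul_I_eq_exp_mul_I_iff.1 (by exact_mod_cast hmod))
  have hsum_p : α + φ ≡ β + ψ [PMOD p] :=
    AddCommGroup.ModEq.of_nsmul (n := k + 1) <| by
      rwa [nsmul_eq_mul, Nat.cast_succ, mul_div_cancel₀ _ hk]
  have hφψ : φ = ψ :=
    (hαβ.add_iff_left.1 hsum_p).eq_of_mem_Ico (by positivity)
      ⟨hφ0.le, by rwa [zero_add]⟩ ⟨hψ0.le, by rwa [zero_add]⟩
  subst hφψ
  exact ⟨Complex.exp_mul_I_eq_exp_mul_I_iff.2 (hsum.add_right_cancel' φ), rfl⟩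
end

section
/- Let Λ = ℤ₂[R^{±1}, T^{±1}, S₁^{±1}, S₂^{±1}] be the Laurent polynomial ring in four variables over 𝔽₂, and define D₁ = R + R⁻¹(T⁻¹S₁ + S₁ + S₂ + T S₂) and D₂ = R⁻¹(T⁻¹S₁ + T S₂). Then the ring homomorphism φ : Λ → ℤ₂[R^{±1}] determined by φ(R) = φ(T) = φ(S₂) = R and φ(S₁) = 1 sends the ideal (D₁, D₂) into the proper ideal (1 + R + R²) of ℤ₂[R^{±1}]; in particular 1 ∉ (D₁, D₂). -/
namespace TwistTorusStmt6

/-- The Laurent polynomial ring `Λ = ℤ₂[R^{±1}, T^{±1}, S₁^{±1}, S₂^{±1}]`,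
realized as the group algebra of `ℤ⁴` over `𝔽₂`. -/
abbrev Λ : Type := AddMonoidAlgebra (ZMod 2) (Fin 4 →₀ ℤ)

/-- The monomial with exponent vector `v`. -/
noncomputable def mono (v : Fin 4 →₀ ℤ) : Λ := AddMonoidAlgebra.single v 1

noncomputable def R : Λ := mono (Finsupp.single 0 1)
noncomputable def Rinv : Λ := mono (Finsupp.single 0 (-1))
noncomputable def Tv : Λ := mono (Finsupp.single 1 1)
noncomputable def Tinv : Λ := mono (Finsupp.single 1 (-1))
noncomputable def S₁ : Λ := mono (Finsupp.single 2 1)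
noncomputable def S₂ : Λ := mono (Finsupp.single 3 1)

/-- `D₁ = d₂Γ* = R + R⁻¹(T⁻¹S₁ + S₁ + S₂ + T S₂)`. -/
noncomputable def D₁ : Λ := R + Rinv * (Tinv * S₁ + S₁ + S₂ + Tv * S₂)

/-- `D₂ = d₂τ* = R⁻¹(T⁻¹S₁ + T S₂)`. -/
noncomputable def D₂ : Λ := Rinv * (Tinv * S₁ + Tv * S₂)


/-!
Specializing `T, S₂ ↦ R` and `S₁ ↦ 1` turns `D₁` and `D₂` into multiples of `1 + R + R²`, and over
any domain `1 + R + R²` is not a unit of the Laurent polynomial ring in `R`: it vanishes at a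
primitive cube root of unity `ω`, the root of `Φ₃ = X² + X + 1` in the nontrivial ring
`AdjoinRoot Φ₃`, where `ω` is invertible with inverse `-(1 + ω)`.
-/

open LaurentPolynomial

theorem one_notMem_span_singleton_of_map_eq_zero {A B : Type*} [CommRing A] [CommRing B]
    [Nontrivial B] (ψ : A →+* B) {g : A} (hg : ψ g = 0) : (1 : A) ∉ Ideal.span {g} := by
  have hker : Ideal.span {g} ≤ RingHom.ker ψ := (Ideal.span_singleton_le_iff_mem _).2 hg
  exact fun h ↦ RingHom.ker_ne_top ψ ((Ideal.eq_top_iff_one _).2 (hker h))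

theorem isUnit_of_one_add_add_sq_eq_zero {R : Type*} [CommRing R] {ω : R}
    (h : 1 + ω + ω ^ 2 = 0) : IsUnit ω :=
  IsUnit.of_mul_eq_one (-(1 + ω)) (by linear_combination -h)

open Polynomial in
theorem one_notMem_span_one_add_T_add_T_two {R : Type*} [CommRing R] [IsDomain R] :
    (1 : R[T;T⁻¹]) ∉ Ideal.span {1 + T 1 + T 2} := by
  have : Nontrivial (AdjoinRoot (cyclotomic 3 R)) :=
    AdjoinRoot.nontrivial _ (degree_cyclotomic_pos 3 R three_pos).ne'
  set ω := AdjoinRoot.root (cyclotomic 3 R)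
  have hω : 1 + ω + ω ^ 2 = 0 := by
    have h : aeval ω (X ^ 2 + X + 1 : R[X]) = 0 := by
      rw [← cyclotomic_three, AdjoinRoot.aeval_eq, AdjoinRoot.mk_self]
    simp only [map_add, map_pow, aeval_X, map_one] at h
    linear_combination h
  apply one_notMem_span_singleton_of_map_eq_zero
    (eval₂ (algebraMap R (AdjoinRoot (cyclotomic 3 R))) (isUnit_of_one_add_add_sq_eq_zero hω).unit)
  simpa using hω

/-- `R^a T^b S₁^c S₂^d ↦ R^(a + b + d)`, i.e. `R, T, S₂ ↦ R` and `S₁ ↦ 1`. -/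
noncomputable def specializationWeight : (Fin 4 →₀ ℤ) →+ ℤ :=
  Finsupp.applyAddHom 0 + Finsupp.applyAddHom 1 + Finsupp.applyAddHom 3

noncomputable def specialization : Λ →+* LaurentPolynomial (ZMod 2) :=
  AddMonoidAlgebra.mapDomainRingHom (ZMod 2) specializationWeight

@[simp]
theorem specialization_mono (v : Fin 4 →₀ ℤ) :
    specialization (mono v) = T (specializationWeight v) := by
  simp only [specialization, mono, AddMonoidAlgebra.mapDomainRingHom_apply,
    AddMonoidAlgebra.mapDomain_single]
  rfl

@[simp]
theorem specializationWeight_single (i : Fin 4) (n : ℤ) :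
    specializationWeight (Finsupp.single i n) = if i = 2 then 0 else n := by
  fin_cases i <;> simp [specializationWeight]

theorem specialization_R : specialization R = T 1 := by simp [R]
theorem specialization_Tv : specialization Tv = T 1 := by simp [Tv]
theorem specialization_S₁ : specialization S₁ = 1 := by simp [S₁]
theorem specialization_S₂ : specialization S₂ = T 1 := by simp [S₂]

-- `grind` needs the characteristic to cancel the pairs `T n + T n` below.
instance : CharP (LaurentPolynomial (ZMod 2)) 2 := charP_of_injective_algebraMap' (ZMod 2) 2

theorem specialization_D₁ : specialization D₁ = T (-2) * (1 + T 1 + T 2) := by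
  simp only [D₁, R, Rinv, Tv, Tinv, S₁, S₂, map_add, map_mul, specialization_mono,
    specializationWeight_single, mul_add, mul_one, ← T_add]
  norm_num
  grind [T_zero]

theorem specialization_D₂ : specialization D₂ = (T (-2) + T (-1)) * (1 + T 1 + T 2) := by
  simp only [D₂, Rinv, Tv, Tinv, S₁, S₂, map_add, map_mul, specialization_mono,
    specializationWeight_single, mul_add, add_mul, mul_one, ← T_add]
  norm_num
  grind [T_zero]

theorem span_D_le_comap_specialization :
    Ideal.span ({D₁, D₂} : Set Λ) ≤
      (Ideal.span ({1 + T 1 + T 2} : Set (LaurentPolynomial (ZMod 2)))).comap specialization := by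
  simp only [Ideal.span_le, Set.insert_subset_iff, Set.singleton_subset_iff, SetLike.mem_coe,
    Ideal.mem_comap, Ideal.mem_span_singleton, specialization_D₁, specialization_D₂]
  exact ⟨dvd_mul_left _ _, dvd_mul_left _ _⟩

open LaurentPolynomial in
/-- the ring homomorphism `φ : Λ → ℤ₂[R^{±1}]` with
`φ(R) = φ(T) = φ(S₂) = R`, `φ(S₁) = 1` sends the ideal `(D₁, D₂)` into the
proper ideal `(1 + R + R²)`; in particular `1 ∉ (D₁, D₂)`. -/
theorem pearl_differential_image_proper :
    ∃ φ : Λ →+* LaurentPolynomial (ZMod 2),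
      φ R = T 1 ∧ φ Tv = T 1 ∧ φ S₂ = T 1 ∧ φ S₁ = 1 ∧
      (∀ x ∈ Ideal.span ({D₁, D₂} : Set Λ),
        φ x ∈ Ideal.span ({1 + T 1 + T 2} : Set (LaurentPolynomial (ZMod 2)))) ∧
      (1 : LaurentPolynomial (ZMod 2)) ∉
        Ideal.span ({1 + T 1 + T 2} : Set (LaurentPolynomial (ZMod 2))) ∧
      (1 : Λ) ∉ Ideal.span ({D₁, D₂} : Set Λ) := by
  have hmaps : ∀ x ∈ Ideal.span ({D₁, D₂} : Set Λ),
      specialization x ∈ Ideal.span {1 + T 1 + T 2} := fun _ hx ↦ span_D_le_comap_specialization hx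
  have hproper := one_notMem_span_one_add_T_add_T_two (R := ZMod 2)
  refine ⟨specialization, specialization_R, specialization_Tv, specialization_S₂,
    specialization_S₁, hmaps, hproper, fun h ↦ hproper ?_⟩
  simpa using hmaps 1 h

end TwistTorusStmt6
end
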